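/- arXiv:2205.15915 — 3 statements merged into one kernel-verified Lean document; each statement's English description precedes it below -/
import Mathlib

section
/- If an infinite path w of the sink-extended KTS K_ι satisfies enc_ι(P), then there exists a unique finite path ẇ of K such that ẇ satisfies enc(P) and w = ẇ·ι^ω. -/
set_option autoImplicit true

section IFCIL

variable {N O S A Pr : Type}

/-- Node patterns: a concrete node or the wildcard `*`. -/
inductive NodePat (N : Type) where
  | star : NodePat N
  | node : N → NodePat N

/-- An arc of an information flow diagram: source, nonempty set of operations, target. -/
abbrev Arc (N O : Type) := N × Set O × N

/-- An information flow diagram `I = (N, ta, E)`. -/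
structure IFD (N O : Type) where
  ta : N → Set N
  E : Set (Arc N O)

/-- A node pattern `m` matches a node `n`: `m = *` or `n ∈ ta(m)`. -/
def NodePat.mat (I : IFD N O) : NodePat N → N → Prop
  | .star, _ => True
  | .node m, n => n ∈ I.ta m

/-- Consecutive arcs have matching endpoints. -/
def Chained : List (Arc N O) → Prop
  | [] => True
  | [_] => True
  | a :: b :: rest => a.2.2 = b.1 ∧ Chained (b :: rest)

/-- A path in `I`: nonempty, chained sequence of arcs of `I`. -/
def PathIn (I : IFD N O) (π : List (Arc N O)) : Prop :=
  π ≠ [] ∧ Chained π ∧ ∀ a ∈ π, a ∈ I.E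

/-- Arrows: single step `>` or multi step `+>`. -/
inductive Arrow where
  | single : Arrow
  | multi : Arrow

/-- Path kinds `P ::= n [o]> n' | n +[o]> n' | P₁ P₂`. -/
inductive Kind (N O : Type) where
  | atom : NodePat N → Arrow → Set O → NodePat N → Kind N O
  | comp : Kind N O → Kind N O → Kind N O

/-- The kind satisfaction relation `π ▷_I P`. -/
inductive KSat (I : IFD N O) : List (Arc N O) → Kind N O → Prop where
  | step : NodePat.mat I m n → NodePat.mat I m' n' → (o ∩ o').Nonempty →
      KSat I [(n, o, n')] (.atom m .single o' m')
  | plusBase : KSat I [(n, o, n')] (.atom m .single o' m') →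
      KSat I [(n, o, n')] (.atom m .multi o' m')
  | plusStep : KSat I [(n, o, n')] (.atom m .single o' .star) →
      KSat I π (.atom .star .multi o' m') →
      KSat I ((n, o, n') :: π) (.atom m .multi o' m')
  | comp : KSat I π₁ P₁ → KSat I π₂ P₂ → KSat I (π₁ ++ π₂) (.comp P₁ P₂)

/-- Node refinement: `n ⪯_n n` and `n ⪯_n *`. -/
def NRef : NodePat N → NodePat N → Prop := fun a b => a = b ∨ b = .star

/-- Arrow refinement: reflexivity and `> ⪯_a +>`. -/
inductive ARef : Arrow → Arrow → Prop where
  | refl (a) : ARef a a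
  | up : ARef .single .multi

/-- Kind refinement `⪯_P`: rules (comp), (P-1)–(P-4), closed under reflexivity
and transitivity. -/
inductive KRef : Kind N O → Kind N O → Prop where
  | refl (P) : KRef P P
  | trans : KRef P Q → KRef Q R → KRef P R
  | comp : KRef P₁ P₁' → KRef P₂ P₂' → KRef (.comp P₁ P₂) (.comp P₁' P₂')
  | atom : NRef n₁ n₁' → NRef n₂ n₂' → ARef w w' → o ⊆ o' →
      KRef (.atom n₁ w o n₂) (.atom n₁' w' o' n₂')
  | p2 : NRef n₁ n₁' → NRef n₂ n₂' → o₁ ⊆ o₁' → o₁ ⊆ o₂' → o₂ ⊆ o₂' →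
      KRef (.comp (.atom n₁ .multi o₁ .star) (.atom .star .single o₂ n₂))
           (.comp (.atom n₁' .single o₁' .star) (.atom .star .multi o₂' n₂'))
  | p3 : NRef n₁ n₁' → NRef n₂ n₂' → o₁ ⊆ o' → o₂ ⊆ o' →
      KRef (.comp (.atom n₁ .multi o₁ .star) (.atom .star .multi o₂ n₂))
           (.atom n₁' .multi o' n₂')
  | p4 : NRef n₁ n₁' → NRef n₂ n₂' → o₁ ⊆ o₁' → o₂ ⊆ o₂' → o₂ ⊆ o₁' →
      KRef (.comp (.atom n₁ .single o₁ .star) (.atom .star .multi o₂ n₂))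
           (.comp (.atom n₁' .multi o₁' .star) (.atom .star .single o₂' n₂'))

/-- IFL requirements `R ::= P | ~P | P : P'`. -/
inductive Req (N O : Type) where
  | ex : Kind N O → Req N O
  | no : Kind N O → Req N O
  | constr : Kind N O → Kind N O → Req N O

/-- Validity `I ⊨ R`. -/
def Valid (I : IFD N O) : Req N O → Prop
  | .ex P => ∃ π, PathIn I π ∧ KSat I π P
  | .no P => ¬ ∃ π, PathIn I π ∧ KSat I π P
  | .constr P P' => ∀ π, PathIn I π → KSat I π P → KSat I π P'

/-- Requirement refinement `⪯`: rules (R-1)–(R-3), closed under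
reflexivity and transitivity. -/
inductive RRef : Req N O → Req N O → Prop where
  | refl (R) : RRef R R
  | trans : RRef R₁ R₂ → RRef R₂ R₃ → RRef R₁ R₃
  | ex : KRef P P' → RRef (.ex P) (.ex P')
  | no : KRef P P' → RRef (.no P') (.no P)
  | constr : KRef P₁ P₁' → KRef P₂ P₂' → RRef (.constr P₁' P₂) (.constr P₁ P₂')

/-- The equivalent, right-linear grammar of kinds:
`P ::= n [o]> n' | n +[o]> n' | (n [o]> n') P | (n +[o]> n') P`. -/
inductive LKind (N O : Type) where
  | step : NodePat N → Set O → NodePat N → LKind N O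
  | plus : NodePat N → Set O → NodePat N → LKind N O
  | stepC : NodePat N → Set O → NodePat N → LKind N O → LKind N O
  | plusC : NodePat N → Set O → NodePat N → LKind N O → LKind N O

/-- Kind satisfaction `π ▷_I P` for the right-linear grammar. -/
inductive LSat (I : IFD N O) : List (Arc N O) → LKind N O → Prop where
  | step : NodePat.mat I m n → NodePat.mat I m' n' → (o ∩ o').Nonempty →
      LSat I [(n, o, n')] (.step m o' m')
  | plusBase : LSat I [(n, o, n')] (.step m o' m') →
      LSat I [(n, o, n')] (.plus m o' m')
  | plusStep : LSat I [(n, o, n')] (.step m o' .star) →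
      LSat I π (.plus .star o' m') →
      LSat I ((n, o, n') :: π) (.plus m o' m')
  | stepC : LSat I [(n, o, n')] (.step m o' .star) → LSat I π P →
      LSat I ((n, o, n') :: π) (.stepC m o' m' P)
  | plusCBase : LSat I π (.stepC m o' m' P) → LSat I π (.plusC m o' m' P)
  | plusCStep : LSat I [(n, o, n')] (.step m o' .star) →
      LSat I π (.plusC .star o' .star P) →
      LSat I ((n, o, n') :: π) (.plusC m o' m' P)

/-- LTL formulas over atomic propositions `Pr` and actions `A`;
`acts o` stands for the disjunction `⋁_{op ∈ o} (op)`. -/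
inductive LTL (Pr A : Type) where
  | tt : LTL Pr A
  | atom : Pr → LTL Pr A
  | acts : Set A → LTL Pr A
  | and : LTL Pr A → LTL Pr A → LTL Pr A
  | or : LTL Pr A → LTL Pr A → LTL Pr A
  | not : LTL Pr A → LTL Pr A
  | next : LTL Pr A → LTL Pr A
  | untl : LTL Pr A → LTL Pr A → LTL Pr A

/-- A finite KTS path: a state followed by a list of (action, state) steps. -/
structure FinPath (S A : Type) where
  first : S
  rest : List (A × S)

/-- Drop the first `k` transitions of a finite path. -/
def FinPath.drop : FinPath S A → ℕ → FinPath S A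
  | w, 0 => w
  | ⟨s, []⟩, _ + 1 => ⟨s, []⟩
  | ⟨_, (_, s') :: r⟩, k + 1 => FinPath.drop ⟨s', r⟩ k

/-- Finite-path LTL semantics `w ⊨_l φ` with labeling `L`. -/
def FSat (L : S → Set Pr) : LTL Pr A → FinPath S A → Prop
  | .tt, _ => True
  | .atom p, w => p ∈ L w.first
  | .acts o, w => ∃ a s r, w.rest = (a, s) :: r ∧ a ∈ o
  | .and φ ψ, w => FSat L φ w ∧ FSat L ψ w
  | .or φ ψ, w => FSat L φ w ∨ FSat L ψ w
  | .not φ, w => ¬ FSat L φ w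
  | .next φ, w => ∃ a s r, w.rest = (a, s) :: r ∧ FSat L φ ⟨s, r⟩
  | .untl φ ψ, w => ∃ k, k ≤ w.rest.length ∧ FSat L ψ (w.drop k) ∧
      ∀ j < k, FSat L φ (w.drop j)

/-- The LTL encoding `enc(P)` of flow kinds (finite-path version,
with end marker `¬X(true)`). -/
def encK : LKind N O → LTL (NodePat N) O
  | .step n o n' =>
      .and (.atom n) (.and (.acts o) (.next (.and (.atom n') (.not (.next .tt)))))
  | .plus n o n' =>
      .and (.atom n) (.and (.acts o)
        (.next (.untl (.acts o) (.and (.atom n') (.not (.next .tt))))))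
  | .stepC n o _ P => .and (.atom n) (.and (.acts o) (.next (encK P)))
  | .plusC n o _ P =>
      .and (.atom n) (.and (.acts o) (.next (.untl (.acts o) (encK P))))

/-- The labeling `Λ` of the KTS of `I`: `M ∈ Λ(n)` iff `n ∈ ta(M)`
(with the wildcard true everywhere). -/
def labelOf (I : IFD N O) : N → Set (NodePat N) :=
  fun n => {p | NodePat.mat I p n}

/-- `encRest π r`: the steps `r` traverse the arcs `π` choosing one
operation from each arc's operation set. -/
def encRest : List (Arc N O) → List (O × N) → Prop
  | [], [] => True
  | (_, o, n') :: π, (op, s) :: r => op ∈ o ∧ s = n' ∧ encRest π r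
  | _, _ => False

/-- `w ∈ enc(π)` : the KTS path `w` results from the diagram path `π`
by choosing one operation from each arc's operation set. -/
def encPath (π : List (Arc N O)) (w : FinPath N O) : Prop :=
  match π with
  | [] => False
  | (n, _, _) :: _ => w.first = n ∧ encRest π w.rest

/-- Auxiliary for `π_w`. -/
def diagOf : N → List (O × N) → List (Arc N O)
  | _, [] => []
  | s, (op, s') :: r => (s, ({op} : Set O), s') :: diagOf s' r

/-- `π_w`: the diagram path obtained from a KTS path by replacing each
action `op` with the singleton `{op}`. -/
def FinPath.toDiagram (w : FinPath N O) : List (Arc N O) := diagOf w.first w.rest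

/-- A transition of the KTS of `I`: `E' = {(n, op, n') | (n,o,n') ∈ E, op ∈ o}`. -/
def ktsStep (I : IFD N O) (s : N) (op : O) (s' : N) : Prop :=
  ∃ o, (s, o, s') ∈ I.E ∧ op ∈ o

def ktsRest (I : IFD N O) : N → List (O × N) → Prop
  | _, [] => True
  | s, (op, s') :: r => ktsStep I s op s' ∧ ktsRest I s' r

/-- `w` is a (finite) path of the KTS of `I`. -/
def KTSPath (I : IFD N O) (w : FinPath N O) : Prop := ktsRest I w.first w.rest

/-- `K ⊨_l φ`: every finite path of the KTS of `I` satisfies `φ`. -/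
def KModels (I : IFD N O) (φ : LTL (NodePat N) O) : Prop :=
  ∀ w, KTSPath I w → FSat (labelOf I) φ w

/-- IFL requirements over right-linear kinds. -/
inductive LReq (N O : Type) where
  | ex : LKind N O → LReq N O
  | no : LKind N O → LReq N O
  | constr : LKind N O → LKind N O → LReq N O

/-- Validity `I ⊨ R` for right-linear requirements. -/
def LValid (I : IFD N O) : LReq N O → Prop
  | .ex P => ∃ π, PathIn I π ∧ LSat I π P
  | .no P => ¬ ∃ π, PathIn I π ∧ LSat I π P
  | .constr P P' => ∀ π, PathIn I π → LSat I π P → LSat I π P'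

/-- Satisfaction `K ⊢ R` in the finite-path KTS semantics. -/
def KEnt (I : IFD N O) : LReq N O → Prop
  | .ex P => ¬ KModels I (.not (encK P))
  | .no P => KModels I (.not (encK P))
  | .constr P P' => KModels I (.or (.not (encK P)) (encK P'))

/-- Infinite KTS paths. -/
structure InfPath (S A : Type) where
  state : ℕ → S
  act : ℕ → A

def InfPath.drop (w : InfPath S A) (k : ℕ) : InfPath S A :=
  ⟨fun i => w.state (i + k), fun i => w.act (i + k)⟩

/-- Infinite-path LTL semantics. -/
def ISat (L : S → Set Pr) : LTL Pr A → InfPath S A → Prop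
  | .tt, _ => True
  | .atom p, w => p ∈ L (w.state 0)
  | .acts o, w => w.act 0 ∈ o
  | .and φ ψ, w => ISat L φ w ∧ ISat L ψ w
  | .or φ ψ, w => ISat L φ w ∨ ISat L ψ w
  | .not φ, w => ¬ ISat L φ w
  | .next φ, w => ISat L φ (w.drop 1)
  | .untl φ ψ, w => ∃ k, ISat L ψ (w.drop k) ∧ ∀ j < k, ISat L φ (w.drop j)

/-- Atomic propositions for the sink-extended KTS: node patterns plus
the distinguished proposition `ι`. -/
abbrev SProp (N : Type) := NodePat N ⊕ Unit

/-- Labeling of the sink-extended KTS: the sink (`none`) is labeled only by `ι`. -/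
def labelι (I : IFD N O) : Option N → Set (SProp N)
  | some n => {p | ∃ q, p = Sum.inl q ∧ NodePat.mat I q n}
  | none => {Sum.inr ()}

/-- The encoding `enc_ι(P)` of flow kinds for the sink-extended KTS:
identical to `enc` except that `¬X(true)` is replaced by `X(ι)`. -/
def encι : LKind N O → LTL (SProp N) O
  | .step n o n' =>
      .and (.atom (.inl n)) (.and (.acts o)
        (.next (.and (.atom (.inl n')) (.next (.atom (.inr ()))))))
  | .plus n o n' =>
      .and (.atom (.inl n)) (.and (.acts o)
        (.next (.untl (.acts o) (.and (.atom (.inl n')) (.next (.atom (.inr ())))))))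
  | .stepC n o _ P => .and (.atom (.inl n)) (.and (.acts o) (.next (encι P)))
  | .plusC n o _ P =>
      .and (.atom (.inl n)) (.and (.acts o) (.next (.untl (.acts o) (encι P))))

/-- The states of a finite path. -/
def FinPath.states (w : FinPath S A) : List S := w.first :: w.rest.map Prod.snd

/-- `w·ι^ω`: the finite path `w` followed by the sink forever
(with arbitrary operation labels `ops` into `ι`). -/
def appendSink (w : FinPath N O) (ops : ℕ → O) : InfPath (Option N) O where
  state := fun i => w.states[i]?
  act := fun i => if h : i < w.rest.length then (w.rest.get ⟨i, h⟩).1 else ops i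

/-- Transitions of the sink-extended KTS `K_ι`: the transitions of `K`,
transitions from every state to the sink with every operation, and the
self-loop on the sink. -/
def sinkStep (I : IFD N O) : Option N → O → Option N → Prop
  | some s, op, some s' => ktsStep I s op s'
  | _, _, none => True
  | none, _, some _ => False

/-- `w` is an infinite path of the sink-extended KTS `K_ι`. -/
def KιPath (I : IFD N O) (w : InfPath (Option N) O) : Prop :=
  ∀ i, sinkStep I (w.state i) (w.act i) (w.state (i + 1))

/-- `K_ι ⊨_l φ`: every infinite path of `K_ι` satisfies `φ`. -/
def KιModels (I : IFD N O) (φ : LTL (SProp N) O) : Prop :=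
  ∀ w, KιPath I w → ISat (labelι I) φ w

/-- Satisfaction `K_ι ⊢ R` in the infinite-path, sink-extended semantics. -/
def KιEnt (I : IFD N O) : LReq N O → Prop
  | .ex P => ¬ KιModels I (.not (encι P))
  | .no P => KιModels I (.not (encι P))
  | .constr P P' => KιModels I (.or (.not (encι P)) (encι P'))

/-- The leading node constraint of a kind. -/
def LKind.firstNode : LKind N O → NodePat N
  | .step n _ _ => n
  | .plus n _ _ => n
  | .stepC n _ _ _ => n
  | .plusC n _ _ _ => n

/-- The leading operation set of a kind. -/
def LKind.firstOps : LKind N O → Set O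
  | .step _ o _ => o
  | .plus _ o _ => o
  | .stepC _ o _ _ => o
  | .plusC _ o _ _ => o

end IFCIL

/-! The states of `w` before its first visit to the sink form a path `ẇ` of `K`, and `w` is
`ẇ·ι^ω` because the sink is absorbing. On `ẇ·ι^ω` the end marker `X(ι)` holds exactly at the
last state of `ẇ`, where `¬X(true)` holds in the finite semantics, so `ẇ` satisfies `enc(P)`.
`ẇ` is unique since `ẇ·ι^ω` determines `ẇ`. -/

namespace FinPath

variable {S A : Type}

@[simp]
lemma length_states (v : FinPath S A) : v.states.length = v.rest.length + 1 := by
  simp [states]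

@[simp]
lemma drop_cons_succ (s t : S) (a : A) (r : List (A × S)) (k : ℕ) :
    (⟨s, (a, t) :: r⟩ : FinPath S A).drop (k + 1) = (⟨t, r⟩ : FinPath S A).drop k :=
  rfl

@[simp]
lemma drop_zero (v : FinPath S A) : v.drop 0 = v := by
  cases v; rfl

lemma rest_drop (v : FinPath S A) (k : ℕ) : (v.drop k).rest = v.rest.drop k := by
  induction k generalizing v with
  | zero => simp
  | succ k ih =>
    obtain ⟨s, _ | ⟨⟨a, t⟩, r⟩⟩ := v
    · simp [FinPath.drop]
    · simp [ih]

lemma states_drop (v : FinPath S A) {k : ℕ} (hk : k ≤ v.rest.length) :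
    (v.drop k).states = v.states.drop k := by
  induction k generalizing v with
  | zero => simp
  | succ k ih =>
    obtain ⟨s, _ | ⟨⟨a, t⟩, r⟩⟩ := v
    · simp at hk
    · simp only [drop_cons_succ]
      rw [ih _ (by simpa using hk)]
      simp [states]

end FinPath

section AppendSink

variable {N O : Type}

lemma appendSink_state_eq_none {v : FinPath N O} {ops : ℕ → O} {i : ℕ}
    (hi : v.rest.length < i) : (appendSink v ops).state i = none :=
  List.getElem?_eq_none (by simpa using hi)

lemma appendSink_act_of_lt {v : FinPath N O} {ops : ℕ → O} {i : ℕ}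
    (hi : i < v.rest.length) : (appendSink v ops).act i = v.rest[i].1 := by
  simp [appendSink, hi]

lemma appendSink_drop (v : FinPath N O) (ops : ℕ → O) {k : ℕ} (hk : k ≤ v.rest.length) :
    (appendSink v ops).drop k = appendSink (v.drop k) (fun i => ops (i + k)) := by
  simp only [InfPath.drop, appendSink, FinPath.states_drop v hk, FinPath.rest_drop,
    List.getElem?_drop, List.length_drop, List.get_eq_getElem, List.getElem_drop,
    Nat.add_comm k, Nat.lt_sub_iff_add_lt]

lemma appendSink_drop_one (s t : N) (a : O) (r : List (O × N)) (ops : ℕ → O) :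
    (appendSink ⟨s, (a, t) :: r⟩ ops).drop 1 = appendSink ⟨t, r⟩ (fun i => ops (i + 1)) :=
  appendSink_drop _ ops (by simp)

lemma appendSink_injective {v v' : FinPath N O} {ops ops' : ℕ → O}
    (h : appendSink v ops = appendSink v' ops') : v = v' := by
  have hstates : v.states = v'.states :=
    List.ext_getElem? fun i => congrArg (·.state i) h
  have hlen : v.rest.length = v'.rest.length := by
    simpa using congrArg List.length hstates
  have hfst : v.rest.map Prod.fst = v'.rest.map Prod.fst := by
    refine List.ext_getElem (by simpa using hlen) fun i hi hi' => ?_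
    simp only [List.length_map] at hi hi'
    simpa [appendSink_act_of_lt hi, appendSink_act_of_lt hi'] using congrArg (·.act i) h
  obtain ⟨s, r⟩ := v
  obtain ⟨s', r'⟩ := v'
  obtain ⟨hs, hsnd⟩ := List.cons.inj hstates
  exact congrArg₂ FinPath.mk hs
    ((List.zip_of_prod hfst hsnd).trans (List.zip_of_prod rfl rfl).symm)

end AppendSink

lemma InfPath.ext_of_drop_one {S A : Type} {u u' : InfPath S A} (h0 : u.state 0 = u'.state 0)
    (ha : u.act 0 = u'.act 0) (h1 : u.drop 1 = u'.drop 1) : u = u' := by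
  obtain ⟨σ, α⟩ := u
  obtain ⟨σ', α'⟩ := u'
  simp only [InfPath.drop, InfPath.mk.injEq, funext_iff] at h0 ha h1 ⊢
  constructor <;> intro i <;> cases i
  exacts [h0, h1.1 _, ha, h1.2 _]

namespace KιPath

variable {N O : Type} {I : IFD N O} {w : InfPath (Option N) O}

lemma drop_one (hw : KιPath I w) : KιPath I (w.drop 1) :=
  fun i => hw (i + 1)

lemma state_eq_none_of_le (hw : KιPath I w) {i j : ℕ} (hi : w.state i = none) (hij : i ≤ j) :
    w.state j = none := by
  induction j, hij using Nat.le_induction with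
  | base => exact hi
  | succ j _ ih =>
    have hj := hw j
    rw [ih] at hj
    cases h : w.state (j + 1) with
    | none => rfl
    | some _ => simp [h, sinkStep] at hj

lemma eq_appendSink_nil (hw : KιPath I w) {s : N} (h0 : w.state 0 = some s)
    (h1 : w.state 1 = none) : w = appendSink ⟨s, []⟩ w.act := by
  obtain ⟨σ, α⟩ := w
  simp only [appendSink, InfPath.mk.injEq, FinPath.states]
  refine ⟨funext fun i => ?_, by simp⟩
  cases i with
  | zero => exact h0
  | succ i => simpa using hw.state_eq_none_of_le h1 (Nat.le_add_left 1 i)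

lemma exists_eq_appendSink (hw : KιPath I w) {s : N} (h0 : w.state 0 = some s) {k : ℕ}
    (hk : w.state k = none) :
    ∃ v : FinPath N O, v.first = s ∧ KTSPath I v ∧ w = appendSink v w.act := by
  induction k generalizing w s with
  | zero => simp [h0] at hk
  | succ k ih =>
    cases h1 : w.state 1 with
    | none => exact ⟨⟨s, []⟩, rfl, trivial, hw.eq_appendSink_nil h0 h1⟩
    | some t =>
      obtain ⟨⟨t, r⟩, rfl, hv, hdrop⟩ := ih hw.drop_one h1 hk
      have hstep : ktsStep I s (w.act 0) t := by simpa [h0, h1, sinkStep] using hw 0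
      refine ⟨⟨s, (w.act 0, t) :: r⟩, rfl, ⟨hstep, hv⟩, ?_⟩
      refine InfPath.ext_of_drop_one h0 (by simp [appendSink]) ?_
      rw [appendSink_drop_one]
      exact hdrop

end KιPath

section Encoding

variable {N O : Type} {I : IFD N O}

@[simp]
lemma inl_mem_labelι_some {p : NodePat N} {s : N} :
    Sum.inl p ∈ labelι I (some s) ↔ NodePat.mat I p s := by
  simp [labelι]

@[simp]
lemma inl_notMem_labelι_none {p : NodePat N} : Sum.inl p ∉ labelι I none := by
  simp [labelι]

@[simp]
lemma inr_mem_labelι {x : Option N} : Sum.inr () ∈ labelι I x ↔ x = none := by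
  cases x <;> simp [labelι]

lemma encι_state_zero {P : LKind N O} {u : InfPath (Option N) O}
    (h : ISat (labelι I) (encι P) u) : ∃ s, u.state 0 = some s := by
  have h0 : Sum.inl P.firstNode ∈ labelι I (u.state 0) := by
    cases P <;> exact h.1
  cases hs : u.state 0 with
  | none => simp [hs] at h0
  | some s => exact ⟨s, rfl⟩

lemma encι_exists_state_eq_none {P : LKind N O} {u : InfPath (Option N) O}
    (h : ISat (labelι I) (encι P) u) : ∃ k, u.state k = none := by
  induction P generalizing u with
  | step => exact ⟨_, inr_mem_labelι.mp h.2.2.2⟩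
  | plus => obtain ⟨k, ⟨-, hk⟩, -⟩ := h.2.2; exact ⟨_, inr_mem_labelι.mp hk⟩
  | stepC _ _ _ _ ih => obtain ⟨k, hk⟩ := ih h.2.2; exact ⟨_, hk⟩
  | plusC _ _ _ _ ih =>
    obtain ⟨j, hj, -⟩ := h.2.2
    obtain ⟨k, hk⟩ := ih hj
    exact ⟨_, hk⟩

/-- The `X` and `U` witnesses of `enc_ι(P)` on `ẇ·ι^ω` stay inside `ẇ` because the
formulas they must satisfy are false on `ι^ω`. -/
def FailsOnSink (I : IFD N O) (φ : LTL (SProp N) O) : Prop :=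
  ∀ u : InfPath (Option N) O, (∀ i, u.state i = none) → ¬ ISat (labelι I) φ u

lemma failsOnSink_encι (P : LKind N O) : FailsOnSink I (encι P) := fun u hu h => by
  obtain ⟨s, hs⟩ := encι_state_zero h
  simp [hu] at hs

lemma failsOnSink_endMarker (n : NodePat N) :
    FailsOnSink I (.and (.atom (.inl n)) (.next (.atom (.inr ())))) :=
  fun u hu h => by simpa [ISat, hu] using h.1

lemma FailsOnSink.untl {φ ψ : LTL (SProp N) O} (hψ : FailsOnSink I ψ) :
    FailsOnSink I (.untl φ ψ) :=
  fun u hu ⟨k, hk, _⟩ => hψ (u.drop k) (fun i => hu (i + k)) hk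

lemma fSat_endMarker_of_iSat {n : NodePat N} {v : FinPath N O} {ops : ℕ → O}
    (h : ISat (labelι I) (.and (.atom (.inl n)) (.next (.atom (.inr ())))) (appendSink v ops)) :
    FSat (labelOf I) (.and (.atom n) (.not (.next .tt))) v := by
  obtain ⟨s, _ | ⟨⟨a, t⟩, r⟩⟩ := v
  · refine ⟨?_, by simp [FSat]⟩
    simpa [ISat, FSat, labelOf, appendSink, FinPath.states] using h.1
  · simpa [ISat, InfPath.drop, appendSink, FinPath.states] using h.2

lemma fSat_untl_acts_of_iSat {o : Set O} {ψ : LTL (NodePat N) O} {ψ' : LTL (SProp N) O}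
    (hψ' : FailsOnSink I ψ')
    (hψ : ∀ v ops, ISat (labelι I) ψ' (appendSink v ops) → FSat (labelOf I) ψ v)
    {v : FinPath N O} {ops : ℕ → O}
    (h : ISat (labelι I) (.untl (.acts o) ψ') (appendSink v ops)) :
    FSat (labelOf I) (.untl (.acts o) ψ) v := by
  obtain ⟨k, hk, hacts⟩ := h
  have hkv : k ≤ v.rest.length := by
    by_contra hlt
    exact hψ' _ (fun i => appendSink_state_eq_none (ops := ops) (i := i + k) (by omega)) hk
  refine ⟨k, hkv, hψ _ _ (appendSink_drop v ops hkv ▸ hk), fun j hj => ?_⟩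
  have hjv : j < v.rest.length := by omega
  refine ⟨v.rest[j].1, v.rest[j].2, v.rest.drop (j + 1), ?_, ?_⟩
  · rw [FinPath.rest_drop, List.drop_eq_getElem_cons hjv]
  · simpa [ISat, InfPath.drop, appendSink_act_of_lt hjv] using hacts j hj

lemma fSat_firstStep_of_iSat {n : NodePat N} {o : Set O} {χ : LTL (NodePat N) O}
    {χ' : LTL (SProp N) O} (hχ' : FailsOnSink I χ')
    (hχ : ∀ v ops, ISat (labelι I) χ' (appendSink v ops) → FSat (labelOf I) χ v)
    {v : FinPath N O} {ops : ℕ → O}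
    (h : ISat (labelι I) (.and (.atom (.inl n)) (.and (.acts o) (.next χ'))) (appendSink v ops)) :
    FSat (labelOf I) (.and (.atom n) (.and (.acts o) (.next χ))) v := by
  obtain ⟨hn, ho, hnext⟩ := h
  obtain ⟨s, _ | ⟨⟨a, t⟩, r⟩⟩ := v
  · refine (hχ' _ (fun i => ?_) hnext).elim
    exact appendSink_state_eq_none (ops := ops) (i := i + 1) (by simp)
  · rw [ISat, appendSink_drop_one] at hnext
    refine ⟨by simpa [ISat, FSat, labelOf, appendSink, FinPath.states] using hn,
      ⟨a, t, r, rfl, ?_⟩, a, t, r, rfl, hχ _ _ hnext⟩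
    simpa [ISat, appendSink] using ho

lemma fSat_encK_of_iSat_encι (P : LKind N O) {v : FinPath N O} {ops : ℕ → O}
    (h : ISat (labelι I) (encι P) (appendSink v ops)) : FSat (labelOf I) (encK P) v := by
  induction P generalizing v ops with
  | step =>
    exact fSat_firstStep_of_iSat (failsOnSink_endMarker _) (fun _ _ => fSat_endMarker_of_iSat) h
  | plus =>
    exact fSat_firstStep_of_iSat (failsOnSink_endMarker _).untl
      (fun _ _ => fSat_untl_acts_of_iSat (failsOnSink_endMarker _)
        fun _ _ => fSat_endMarker_of_iSat) h
  | stepC _ _ _ P ih => exact fSat_firstStep_of_iSat (failsOnSink_encι P) (fun _ _ => ih) h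
  | plusC _ _ _ P ih =>
    exact fSat_firstStep_of_iSat (failsOnSink_encι P).untl
      (fun _ _ => fSat_untl_acts_of_iSat (failsOnSink_encι P) fun _ _ => ih) h

end Encoding

/-- If an infinite path `w` of the sink-extended KTS `K_ι`
satisfies `enc_ι(P)`, then there exists a unique finite path `ẇ` of `K`
such that `ẇ` satisfies `enc(P)` and `w = ẇ·ι^ω`. -/
theorem sink_to_fin {N O : Type} (I : IFD N O) (w : InfPath (Option N) O)
    (hw : KιPath I w) (P : LKind N O)
    (h : ISat (labelι I) (encι P) w) :
    ∃! wdot : FinPath N O, KTSPath I wdot ∧ FSat (labelOf I) (encK P) wdot ∧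
      ∃ ops : ℕ → O, w = appendSink wdot ops := by
  obtain ⟨s, hs⟩ := encι_state_zero h
  obtain ⟨k, hk⟩ := encι_exists_state_eq_none h
  obtain ⟨v, -, hv, hwv⟩ := hw.exists_eq_appendSink hs hk
  rw [hwv] at h
  refine ⟨v, ⟨hv, fSat_encK_of_iSat_encι P h, w.act, hwv⟩, ?_⟩
  rintro v' ⟨-, -, ops, hv'⟩
  exact appendSink_injective (hv'.symm.trans hwv)
end

section
/- K ⊨_l ¬enc(P) over all finite paths of K if and only if K_ι ⊨_l ¬enc_ι(P) over all infinite paths of K_ι. -/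
set_option autoImplicit true

/-!
The two semantics are linked by `w ↦ w·ι^ω`. On `w·ι^ω` the end marker `¬X true` holds exactly
where `X ι` does, node atoms and actions agree with those of `w` at positions inside `w`, and every
subformula of `enc_ι(P)` that is evaluated under `X` or `U` begins with a node atom, hence fails on
the sink. So `w ⊨ enc(P)` iff `w·ι^ω ⊨ enc_ι(P)`, by induction on `P` and the expansion law of `U`.
Conversely, a path of `K_ι` satisfying `enc_ι(P)` starts in `K` and is driven into the sink by the
atom `ι`; the sink absorbs, so the path is `w·ι^ω` for a finite path `w` of `K`.
-/

set_option autoImplicit false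

@[ext] theorem InfPath.ext {S A : Type} {v v' : InfPath S A}
    (hs : v.state = v'.state) (ha : v.act = v'.act) : v = v' := by
  cases v; cases v'; cases hs; cases ha; rfl

theorem InfPath.ext_drop_one {S A : Type} {v v' : InfPath S A} (h0 : v.state 0 = v'.state 0)
    (ha : v.act 0 = v'.act 0) (h : v.drop 1 = v'.drop 1) : v = v' := by
  ext (_ | i)
  · exact h0
  · exact congrArg (·.state i) h
  · exact ha
  · exact congrArg (·.act i) h

section Semantics

variable {S A Pr : Type} (L : S → Set Pr)

theorem iSat_untl_iff (φ ψ : LTL Pr A) (v : InfPath S A) :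
    ISat L (.untl φ ψ) v ↔ ISat L ψ v ∨ ISat L φ v ∧ ISat L (.untl φ ψ) (v.drop 1) := by
  simp only [ISat]
  constructor
  · rintro ⟨_ | k, hψ, hφ⟩
    · exact Or.inl hψ
    · exact Or.inr ⟨hφ 0 k.succ_pos, k, hψ, fun j hj => hφ (j + 1) (by omega)⟩
  · rintro (hψ | ⟨hφ, k, hψ, hφs⟩)
    · exact ⟨0, hψ, fun _ h => absurd h (Nat.not_lt_zero _)⟩
    · refine ⟨k + 1, hψ, ?_⟩
      rintro (_ | j) hj
      · exact hφ
      · exact hφs j (by omega)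

theorem fSat_untl_nil_iff (φ ψ : LTL Pr A) (s : S) :
    FSat L (.untl φ ψ) (⟨s, []⟩ : FinPath S A) ↔ FSat L ψ ⟨s, []⟩ := by
  simp [FSat, FinPath.drop]

theorem fSat_untl_cons_iff (φ ψ : LTL Pr A) (s : S) (a : A) (s' : S) (r : List (A × S)) :
    FSat L (.untl φ ψ) ⟨s, (a, s') :: r⟩ ↔
      FSat L ψ ⟨s, (a, s') :: r⟩ ∨ FSat L φ ⟨s, (a, s') :: r⟩ ∧ FSat L (.untl φ ψ) ⟨s', r⟩ := by
  simp only [FSat]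
  constructor
  · rintro ⟨_ | k, hk, hψ, hφ⟩
    · exact Or.inl hψ
    · exact Or.inr ⟨hφ 0 k.succ_pos, k, by simpa using hk, hψ,
        fun j hj => hφ (j + 1) (by omega)⟩
  · rintro (hψ | ⟨hφ, k, hk, hψ, hφs⟩)
    · exact ⟨0, Nat.zero_le _, hψ, fun _ h => absurd h (Nat.not_lt_zero _)⟩
    · refine ⟨k + 1, by simpa using hk, hψ, ?_⟩
      rintro (_ | j) hj
      · exact hφ
      · exact hφs j (by omega)

def LTL.Reaches (q : S → Prop) (φ : LTL Pr A) : Prop :=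
  ∀ v : InfPath S A, ISat L φ v → ∃ m, q (v.state m)

variable {L} {q : S → Prop} {φ ψ : LTL Pr A}

theorem LTL.reaches_atom {p : Pr} (h : ∀ s, p ∈ L s → q s) : (atom p : LTL Pr A).Reaches L q :=
  fun _ hv => ⟨0, h _ hv⟩

theorem LTL.Reaches.and_left (h : φ.Reaches L q) (ψ : LTL Pr A) : (φ.and ψ).Reaches L q :=
  fun _ hv => h _ hv.1

theorem LTL.Reaches.and_right (h : ψ.Reaches L q) (φ : LTL Pr A) : (φ.and ψ).Reaches L q :=
  fun _ hv => h _ hv.2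

theorem LTL.Reaches.next (h : φ.Reaches L q) : φ.next.Reaches L q := fun _ hv =>
  let ⟨m, hm⟩ := h _ hv
  ⟨m + 1, hm⟩

theorem LTL.Reaches.untl_right (h : ψ.Reaches L q) (φ : LTL Pr A) : (φ.untl ψ).Reaches L q :=
  fun _ ⟨k, hψ, _⟩ =>
    let ⟨m, hm⟩ := h _ hψ
    ⟨m + k, hm⟩

end Semantics

section Sink

variable {N O : Type}

@[simp] theorem appendSink_state_zero (w : FinPath N O) (ops : ℕ → O) :
    (appendSink w ops).state 0 = some w.first := by
  simp [appendSink, FinPath.states]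

theorem appendSink_nil_state_succ (s : N) (ops : ℕ → O) (i : ℕ) :
    (appendSink ⟨s, []⟩ ops).state (i + 1) = none := by
  simp [appendSink, FinPath.states]

@[simp] theorem appendSink_cons_act_zero (s : N) (a : O) (s' : N) (r : List (O × N))
    (ops : ℕ → O) : (appendSink ⟨s, (a, s') :: r⟩ ops).act 0 = a := by
  simp [appendSink]

theorem appendSink_cons_drop_one (s : N) (a : O) (s' : N) (r : List (O × N)) (ops : ℕ → O) :
    (appendSink ⟨s, (a, s') :: r⟩ ops).drop 1 = appendSink ⟨s', r⟩ (fun i => ops (i + 1)) := by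
  ext i
  · simp [appendSink, InfPath.drop, FinPath.states]
  · simp [appendSink, InfPath.drop]

variable {I : IFD N O}

theorem KιPath.state_eq_none_of_le_s10 {v : InfPath (Option N) O} (hv : KιPath I v) {i j : ℕ}
    (hi : v.state i = none) (hij : i ≤ j) : v.state j = none := by
  induction j, hij using Nat.le_induction with
  | base => exact hi
  | succ j _ ih =>
    have hstep := hv j
    rw [ih] at hstep
    cases h : v.state (j + 1)
    · rfl
    · rw [h] at hstep
      exact hstep.elim

theorem KιPath.drop_one_s10 {v : InfPath (Option N) O} (hv : KιPath I v) : KιPath I (v.drop 1) :=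
  fun i => hv (i + 1)

theorem kιPath_appendSink {w : FinPath N O} (hw : KTSPath I w) (ops : ℕ → O) :
    KιPath I (appendSink w ops) := by
  obtain ⟨s, r⟩ := w
  induction r generalizing s ops with
  | nil =>
    intro i
    rw [appendSink_nil_state_succ]
    cases (appendSink ⟨s, []⟩ ops).state i <;> trivial
  | cons step r ih =>
    obtain ⟨a, s'⟩ := step
    have htail : KιPath I ((appendSink ⟨s, (a, s') :: r⟩ ops).drop 1) := by
      rw [appendSink_cons_drop_one]
      exact ih _ _ hw.2
    rintro (_ | i)
    · simpa [sinkStep, appendSink, FinPath.states] using hw.1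
    · exact htail i

theorem KιPath.exists_appendSink_eq_of_state_zero {v : InfPath (Option N) O} (hv : KιPath I v)
    {s : N} (h0 : v.state 0 = some s) {m : ℕ} (hm : v.state m = none) :
    ∃ w : FinPath N O, KTSPath I w ∧ appendSink w v.act = v := by
  induction m generalizing v s with
  | zero => simp [h0] at hm
  | succ m ih =>
    cases h1 : v.state 1 with
    | none =>
      refine ⟨⟨s, []⟩, trivial, InfPath.ext_drop_one (by simp [h0]) rfl ?_⟩
      refine InfPath.ext (funext fun i => ?_) (funext fun i => ?_)
      · exact (appendSink_nil_state_succ s v.act i).trans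
          (hv.state_eq_none_of_le_s10 h1 (Nat.le_add_left 1 i)).symm
      · simp [InfPath.drop, appendSink]
    | some s' =>
      obtain ⟨w', hw', hv'⟩ := ih hv.drop_one_s10 h1 hm
      have hfirst : w'.first = s' := by
        simpa [InfPath.drop, h1] using congrArg (·.state 0) hv'
      refine ⟨⟨s, (v.act 0, s') :: w'.rest⟩, ⟨?_, hfirst ▸ hw'⟩, ?_⟩
      · simpa [sinkStep, h0, h1] using hv 0
      refine InfPath.ext_drop_one (by simp [h0]) (by simp) ?_
      rw [appendSink_cons_drop_one, ← hv', ← hfirst]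
      rfl

theorem KιPath.exists_appendSink_eq {v : InfPath (Option N) O} (hv : KιPath I v) {k m : ℕ}
    (hk : v.state k ≠ none) (hm : v.state m = none) :
    ∃ w : FinPath N O, KTSPath I w ∧ appendSink w v.act = v := by
  obtain ⟨s, hs⟩ := Option.ne_none_iff_exists'.mp
    fun h0 => hk (hv.state_eq_none_of_le_s10 h0 k.zero_le)
  exact hv.exists_appendSink_eq_of_state_zero hs hm

end Sink

section Encoding

variable {N O : Type} {I : IFD N O}

theorem reaches_some_atom_inl (n : NodePat N) :
    (LTL.atom (.inl n) : LTL (SProp N) O).Reaches (labelι I) (· ≠ none) :=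
  LTL.reaches_atom fun s hs h => by simp [h, labelι] at hs

theorem reaches_some_encι (P : LKind N O) : (encι P).Reaches (labelι I) (· ≠ none) := by
  cases P <;> exact (reaches_some_atom_inl _).and_left _

theorem reaches_sink_encι (P : LKind N O) : (encι P).Reaches (labelι I) (· = none) := by
  have hι : (LTL.atom (.inr ()) : LTL (SProp N) O).next.Reaches (labelι I) (· = none) :=
    (LTL.reaches_atom fun s hs => by cases s <;> simp_all [labelι]).next
  induction P with
  | step => exact ((hι.and_right _).next.and_right _).and_right _
  | plus => exact (((hι.and_right _).untl_right _).next.and_right _).and_right _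
  | stepC _ _ _ _ ih => exact (ih.next.and_right _).and_right _
  | plusC _ _ _ _ ih => exact ((ih.untl_right _).next.and_right _).and_right _

theorem rest_ne_nil_of_fSat_encK {P : LKind N O} {w : FinPath N O}
    (h : FSat (labelOf I) (encK P) w) : w.rest ≠ [] := by
  cases P <;>
  · obtain ⟨-, ⟨a, s, r, hr, -⟩, -⟩ := h
    simp [hr]

variable (I) in
def SinkEquiv (φ : LTL (NodePat N) O) (φ' : LTL (SProp N) O) : Prop :=
  ∀ w ops, FSat (labelOf I) φ w ↔ ISat (labelι I) φ' (appendSink w ops)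

variable {φ ψ : LTL (NodePat N) O} {φ' ψ' : LTL (SProp N) O}

theorem sinkEquiv_atom (p : NodePat N) : SinkEquiv I (.atom p) (.atom (.inl p)) := by
  intro w ops
  simp [FSat, ISat, labelOf, labelι]

theorem sinkEquiv_end : SinkEquiv I (.not (.next .tt)) (.next (.atom (.inr ()))) := by
  rintro ⟨s, _ | ⟨⟨a, s'⟩, r⟩⟩ ops <;>
    simp [FSat, ISat, labelι, InfPath.drop, appendSink, FinPath.states]

theorem SinkEquiv.and (h : SinkEquiv I φ φ') (h' : SinkEquiv I ψ ψ') :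
    SinkEquiv I (.and φ ψ) (.and φ' ψ') :=
  fun w ops => and_congr (h w ops) (h' w ops)

theorem SinkEquiv.acts_and_next (h : SinkEquiv I φ φ') (hφ' : φ'.Reaches (labelι I) (· ≠ none))
    (o : Set O) : SinkEquiv I (.and (.acts o) (.next φ)) (.and (.acts o) (.next φ')) := by
  rintro ⟨s, _ | ⟨⟨a, s'⟩, r⟩⟩ ops
  · refine iff_of_false (by simp [FSat]) fun ⟨_, hnext⟩ => ?_
    obtain ⟨m, hm⟩ := hφ' _ hnext
    exact hm (appendSink_nil_state_succ s ops m)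
  · simp [FSat, ISat, appendSink_cons_drop_one, h ⟨s', r⟩ fun i => ops (i + 1)]

theorem SinkEquiv.acts_untl (h : SinkEquiv I ψ ψ') (hψ' : ψ'.Reaches (labelι I) (· ≠ none))
    (o : Set O) : SinkEquiv I (.untl (.acts o) ψ) (.untl (.acts o) ψ') := by
  rintro ⟨s, r⟩ ops
  induction r generalizing s ops with
  | nil =>
    rw [fSat_untl_nil_iff, iSat_untl_iff, h, or_iff_left]
    rintro ⟨-, huntl⟩
    obtain ⟨m, hm⟩ := hψ'.untl_right _ _ huntl
    exact hm (appendSink_nil_state_succ s ops m)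
  | cons step r ih =>
    obtain ⟨a, s'⟩ := step
    rw [fSat_untl_cons_iff, iSat_untl_iff, appendSink_cons_drop_one, ← ih, ← h]
    simp [FSat, ISat]

theorem sinkEquiv_encK (P : LKind N O) : SinkEquiv I (encK P) (encι P) := by
  have hend (n : NodePat N) := (sinkEquiv_atom (I := I) n).and sinkEquiv_end
  have hend_reaches (n : NodePat N) := (reaches_some_atom_inl (I := I) (O := O) n).and_left
    (.next (.atom (.inr ())))
  induction P with
  | step n o n' => exact (sinkEquiv_atom n).and ((hend n').acts_and_next (hend_reaches n') o)
  | plus n o n' =>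
    exact (sinkEquiv_atom n).and
      (((hend n').acts_untl (hend_reaches n') o).acts_and_next ((hend_reaches n').untl_right _) o)
  | stepC n o _ P ih => exact (sinkEquiv_atom n).and (ih.acts_and_next (reaches_some_encι P) o)
  | plusC n o _ P ih =>
    exact (sinkEquiv_atom n).and ((ih.acts_untl (reaches_some_encι P) o).acts_and_next
      ((reaches_some_encι P).untl_right _) o)

end Encoding

/-- `K ⊨_l ¬enc(P)` over all finite paths of `K` iff
`K_ι ⊨_l ¬enc_ι(P)` over all infinite paths of `K_ι`. -/
theorem neg_fin_iff_sink {N O : Type} (I : IFD N O) (P : LKind N O) :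
    KModels I (.not (encK P)) ↔ KιModels I (.not (encι P)) := by
  constructor
  · intro h v hv hsat
    obtain ⟨k, hk⟩ := reaches_some_encι P v hsat
    obtain ⟨m, hm⟩ := reaches_sink_encι P v hsat
    obtain ⟨w, hw, hvw⟩ := hv.exists_appendSink_eq hk hm
    rw [← hvw] at hsat
    exact h w hw ((sinkEquiv_encK P w _).mpr hsat)
  · intro h w hw hsat
    -- the actions into the sink are arbitrary, but `O` may be empty: borrow one from `w`
    obtain ⟨⟨a, _⟩, _, _⟩ := List.exists_cons_of_ne_nil (rest_ne_nil_of_fSat_encK hsat)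
    exact h _ (kιPath_appendSink hw fun _ => a) ((sinkEquiv_encK P w _).mp hsat)
end

section
/- If π ▷_I (n1 +[o1]> * +[o2]> n2), n1 ⪯_n n1', n2 ⪯_n n2', o1 ⊆ o', and o2 ⊆ o', then π ▷_I (n1' +[o']> n2'): i.e., merging two multi-step segments with a common upper-bound operation set into a single multi-step segment preserves kind satisfaction (rule P-3 is sound). -/
set_option autoImplicit true

lemma mat_mono {N O : Type} (I : IFD N O) {m m' : NodePat N} {n : N}
    (h : NodePat.mat I m n) (r : NRef m m') : NodePat.mat I m' n := by
  rcases r with rfl | rfl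
  · exact h
  · trivial

lemma ksat_step_inv {N O : Type} (I : IFD N O) {π : List (Arc N O)} {P : Kind N O}
    (h : KSat I π P) :
    ∀ (m m' : NodePat N) (o' : Set O), P = .atom m .single o' m' →
    ∃ n o n', π = [(n, o, n')] ∧ NodePat.mat I m n ∧ NodePat.mat I m' n' ∧
      (o ∩ o').Nonempty := by
  induction h with
  | step hm hm' hne =>
    intro m m' o' hP
    cases hP
    exact ⟨_, _, _, rfl, hm, hm', hne⟩
  | plusBase _ _ => intro _ _ _ hP; cases hP
  | plusStep _ _ _ _ => intro _ _ _ hP; cases hP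
  | comp _ _ _ _ => intro _ _ _ hP; cases hP

lemma ksat_multi_mono' {N O : Type} (I : IFD N O) {π : List (Arc N O)} {P : Kind N O}
    (h : KSat I π P) :
    ∀ (m m₂ m' m₂' : NodePat N) (o o'' : Set O),
    P = .atom m .multi o m₂ → o ⊆ o'' → NRef m m' → NRef m₂ m₂' →
    KSat I π (.atom m' .multi o'' m₂') := by
  induction h with
  | step _ _ _ => intro _ _ _ _ _ _ hP; cases hP
  | plusBase h _ =>
    intro m m₂ m' m₂' o o'' hP ho r1 r2
    cases hP
    obtain ⟨n, oa, n', heq, hm, hm', hne⟩ := ksat_step_inv I h _ _ _ rfl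
    cases heq
    exact .plusBase (.step (mat_mono I hm r1) (mat_mono I hm' r2)
      ⟨hne.choose, hne.choose_spec.1, ho hne.choose_spec.2⟩)
  | plusStep h1 _ _ ih =>
    intro m m₂ m' m₂' o o'' hP ho r1 r2
    cases hP
    obtain ⟨n, oa, n', heq, hm, _, hne⟩ := ksat_step_inv I h1 _ _ _ rfl
    cases heq
    exact .plusStep (.step (mat_mono I hm r1) trivial
        ⟨hne.choose, hne.choose_spec.1, ho hne.choose_spec.2⟩)
      (ih _ _ .star m₂' _ o'' rfl ho (.inl rfl) r2)
  | comp _ _ _ _ => intro _ _ _ _ _ _ hP; cases hP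

lemma ksat_multi_mono {N O : Type} (I : IFD N O)
    {π : List (Arc N O)} {m m₂ m' m₂' : NodePat N} {o o'' : Set O}
    (h : KSat I π (.atom m .multi o m₂)) (ho : o ⊆ o'') (r1 : NRef m m')
    (r2 : NRef m₂ m₂') : KSat I π (.atom m' .multi o'' m₂') :=
  ksat_multi_mono' I h m m₂ m' m₂' o o'' rfl ho r1 r2

lemma ksat_multi_append' {N O : Type} (I : IFD N O) {π₁ : List (Arc N O)} {P : Kind N O}
    (h : KSat I π₁ P) :
    ∀ (π₂ : List (Arc N O)) (m m₂ : NodePat N) (o : Set O),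
    P = .atom m .multi o .star → KSat I π₂ (.atom .star .multi o m₂) →
    KSat I (π₁ ++ π₂) (.atom m .multi o m₂) := by
  induction h with
  | step _ _ _ => intro _ _ _ _ hP; cases hP
  | plusBase h _ =>
    intro π₂ m m₂ o hP h2
    cases hP
    obtain ⟨n, oa, n', heq, hm, hm', hne⟩ := ksat_step_inv I h _ _ _ rfl
    cases heq
    exact .plusStep (.step hm hm' hne) h2
  | plusStep h1 _ _ ih =>
    intro π₂ m m₂ o hP h2
    cases hP
    exact .plusStep h1 (ih π₂ .star m₂ _ rfl h2)
  | comp _ _ _ _ => intro _ _ _ _ hP; cases hP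

/-- Rule (P-3) is sound: if
`π ▷_I (n₁ +[o₁]> * +[o₂]> n₂)`, `n₁ ⪯_n n₁'`, `n₂ ⪯_n n₂'`, `o₁ ⊆ o'`, and
`o₂ ⊆ o'`, then `π ▷_I (n₁' +[o']> n₂')`. -/
theorem p3_sound {N O : Type} (I : IFD N O) (π : List (Arc N O))
    (n₁ n₁' n₂ n₂' : NodePat N) (o₁ o₂ o' : Set O)
    (h : KSat I π (.comp (.atom n₁ .multi o₁ .star) (.atom .star .multi o₂ n₂)))
    (h₁ : NRef n₁ n₁') (h₂ : NRef n₂ n₂') (ho₁ : o₁ ⊆ o') (ho₂ : o₂ ⊆ o') :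
    KSat I π (.atom n₁' .multi o' n₂') := by
  cases h with
  | comp h1 h2 =>
    exact ksat_multi_append' I (ksat_multi_mono I h1 ho₁ h₁ (.inl rfl)) _ _ _ _ rfl
      (ksat_multi_mono I h2 ho₂ (.inl rfl) h₂)
end
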